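/- arXiv:1701.00030 — 6 statements merged into one kernel-verified Lean document; each statement's English description precedes it below -/
import Mathlib

section
/- The local truncation error of the exponential quadrature weights is third order: for ς > 0, h > 0, and f three times continuously differentiable, |ς ∫₀^h f(x + h - u) e^{-ς u} du − ω₀(ς,h) f(x) − ω₁(ς,h) f(x+h)| ≤ C h³, where C depends only on ς and a bound on f'' on [x, x+h], with ω₀, ω₁ as given. -/
open intervalIntegral Real

lemma expq (z : ℝ) (hz : 0 ≤ z) : Real.exp (-z) ≤ 1 - z + z^2/2 := by
  have hg : Monotone (fun z : ℝ => 1 - z + z^2/2 - Real.exp (-z)) := by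
    apply monotone_of_deriv_nonneg
    · fun_prop
    · intro t
      have H : HasDerivAt (fun z : ℝ => 1 - z + z^2/2 - Real.exp (-z))
          (-1 + t + Real.exp (-t)) t := by
        have h1 : HasDerivAt (fun z : ℝ => Real.exp (-z)) (-Real.exp (-t)) t := by
          simpa [Function.comp_def] using (Real.hasDerivAt_exp (-t)).comp t (hasDerivAt_neg t)
        have h2 : HasDerivAt (fun z : ℝ => 1 - z + z^2/2) (-1 + t) t := by
          have := ((hasDerivAt_pow 2 t).div_const 2)
          have h3 : HasDerivAt (fun z : ℝ => 1 - z) (-1 : ℝ) t := by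
            simpa using (hasDerivAt_id t).const_sub 1
          simpa [mul_comm, Pi.add_def] using h3.add this
        simpa [Pi.sub_def] using h2.sub h1
      rw [H.deriv]
      nlinarith [Real.add_one_le_exp (-t)]
  have := hg hz
  simp at this
  linarith

lemma intA (ς h : ℝ) (hς : ς ≠ 0) :
    ∫ u in (0:ℝ)..h, Real.exp (-ς*u) = (1 - Real.exp (-ς*h))/ς := by
  have key : ∀ u ∈ Set.uIcc (0:ℝ) h,
      HasDerivAt (fun u => -Real.exp (-ς*u)/ς) (Real.exp (-ς*u)) u := by
    intro u _
    have h1 : HasDerivAt (fun u : ℝ => Real.exp (-ς*u)) (-ς * Real.exp (-ς*u)) u := by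
      simpa [Function.comp_def, mul_comm] using (Real.hasDerivAt_exp (-ς*u)).comp u
        ((hasDerivAt_id u).const_mul (-ς))
    have := (h1.fun_neg).div_const ς
    refine this.congr_deriv ?_
    field_simp
  rw [intervalIntegral.integral_eq_sub_of_hasDerivAt key
    (Continuous.intervalIntegrable (by fun_prop) _ _)]
  field_simp
  rw [mul_zero, neg_zero, Real.exp_zero]; ring

lemma intB (ς h : ℝ) (hς : ς ≠ 0) :
    ∫ u in (0:ℝ)..h, u * Real.exp (-ς*u) = (1 - (1+ς*h)*Real.exp (-ς*h))/ς^2 := by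
  have key : ∀ u ∈ Set.uIcc (0:ℝ) h,
      HasDerivAt (fun u => -((ς*u+1)/ς^2) * Real.exp (-ς*u)) (u * Real.exp (-ς*u)) u := by
    intro u _
    have h1 : HasDerivAt (fun u : ℝ => Real.exp (-ς*u)) (-ς * Real.exp (-ς*u)) u := by
      simpa [Function.comp_def, mul_comm] using (Real.hasDerivAt_exp (-ς*u)).comp u
        ((hasDerivAt_id u).const_mul (-ς))
    have h2 : HasDerivAt (fun u : ℝ => -((ς*u+1)/ς^2)) (-(ς/ς^2)) u := by
      have : HasDerivAt (fun u : ℝ => ς*u+1) ς u := by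
        simpa using ((hasDerivAt_id u).const_mul ς).add_const 1
      simpa [Pi.neg_def] using (this.div_const (ς^2)).neg
    have := h2.mul h1
    refine this.congr_deriv ?_
    field_simp
    ring
  rw [intervalIntegral.integral_eq_sub_of_hasDerivAt key
    (Continuous.intervalIntegrable (by fun_prop) _ _)]
  field_simp
  rw [mul_zero, neg_zero, Real.exp_zero]; ring

open MeasureTheory in

lemma taylorR (x h M : ℝ) (hh : 0 < h) (hM : 0 ≤ M) (f : ℝ → ℝ) (hf : ContDiff ℝ 3 f)
    (hb : ∀ t ∈ Set.Icc x (x+h), |deriv (deriv f) t| ≤ M) :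
    ∀ y ∈ Set.Icc x (x+h), |f y - f x - deriv f x * (y - x)| ≤ M * (y-x)^2/2 := by
  have hf' : ContDiff ℝ 2 (deriv f) := by
    have : ContDiff ℝ ((2:ℕ∞)+1) f := by exact_mod_cast hf
    exact (contDiff_succ_iff_deriv.mp this).2.2
  have hf1 : Differentiable ℝ f := hf.differentiable (by norm_num)
  have hf2 : Differentiable ℝ (deriv f) := hf'.differentiable (by norm_num)
  have hcont : Continuous (deriv f) := hf2.continuous
  -- Lipschitz-type bound on deriv f
  have hlip : ∀ t ∈ Set.Icc x (x+h), |deriv f t - deriv f x| ≤ M * (t - x) := by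
    intro t ht
    have := Convex.norm_image_sub_le_of_norm_deriv_le
      (f := deriv f) (s := Set.Icc x (x+h))
      (fun u _ => hf2 u) (fun u hu => hb u hu) (convex_Icc _ _)
      (Set.left_mem_Icc.mpr (by linarith)) ht
    calc |deriv f t - deriv f x| ≤ M * ‖t - x‖ := this
      _ = M * (t - x) := by rw [Real.norm_eq_abs, abs_of_nonneg (by linarith [ht.1])]
  intro y hy
  have hxy : x ≤ y := hy.1
  have hfund : f y - f x = ∫ t in x..y, deriv f t :=
    (intervalIntegral.integral_deriv_eq_sub (fun t _ => hf1 t)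
      (hcont.intervalIntegrable _ _)).symm
  have hconst : deriv f x * (y - x) = ∫ t in x..y, deriv f x := by
    rw [intervalIntegral.integral_const]; ring_nf
  have hR : f y - f x - deriv f x * (y - x) = ∫ t in x..y, (deriv f t - deriv f x) := by
    rw [intervalIntegral.integral_sub (hcont.intervalIntegrable _ _)
      (intervalIntegrable_const), hfund, hconst]
  rw [hR]
  have hquad : ∫ t in x..y, M * (t - x) = M * (y-x)^2/2 := by
    have key : ∀ t ∈ Set.uIcc x y,
        HasDerivAt (fun t => M * (t-x)^2/2) (M * (t - x)) t := by
      intro t _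
      have : HasDerivAt (fun t : ℝ => (t-x)^2) (2*(t-x)) t := by
        simpa [Pi.pow_def] using ((hasDerivAt_id t).sub_const x).pow 2
      refine ((this.const_mul M).div_const 2).congr_deriv ?_
      ring
    rw [intervalIntegral.integral_eq_sub_of_hasDerivAt key
      (Continuous.intervalIntegrable (by fun_prop) _ _)]
    ring
  have hb2 : ∀ᵐ t ∂volume.restrict (Set.uIoc x y),
      ‖deriv f t - deriv f x‖ ≤ M * (t - x) := by
    rw [MeasureTheory.ae_restrict_iff' measurableSet_uIoc]
    refine .of_forall fun t ht => ?_
    rw [Set.uIoc_of_le hxy] at ht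
    exact hlip t ⟨le_of_lt ht.1, le_trans ht.2 hy.2⟩
  calc |∫ t in x..y, (deriv f t - deriv f x)| ≤ |∫ t in x..y, M * (t - x)| :=
        intervalIntegral.norm_integral_le_abs_of_norm_le hb2
          (Continuous.intervalIntegrable (by fun_prop) _ _)
    _ = M * (y-x)^2/2 := by
        rw [hquad]
        exact abs_of_nonneg (by positivity)

/-- Third-order local truncation error of the exponential quadrature weights:
for `ς > 0` and a bound `M` on `f''`, there is a constant `C` depending only on `ς`
and `M` such that for every `h > 0`, `x`, and three times continuously differentiable
`f` with `|f''| ≤ M` on `[x, x+h]`, the quadrature error is at most `C h³`. -/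
theorem stmt4 (ς M : ℝ) (hς : 0 < ς) (hM : 0 ≤ M) :
    ∃ C : ℝ, 0 ≤ C ∧ ∀ (h x : ℝ) (f : ℝ → ℝ), 0 < h → ContDiff ℝ 3 f →
      (∀ t ∈ Set.Icc x (x + h), |deriv (deriv f) t| ≤ M) →
      |(ς * ∫ u in (0:ℝ)..h, f (x + h - u) * Real.exp (-ς * u)) -
        ((1 - (1 + ς * h) * Real.exp (-ς * h)) / (ς * h) * f x +
          (-1 + ς * h + Real.exp (-ς * h)) / (ς * h) * f (x + h))| ≤ C * h ^ 3 := by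
  refine ⟨ς * M, by positivity, ?_⟩
  intro h x f hh hf hb
  have hς' : ς ≠ 0 := ne_of_gt hς
  have hh' : h ≠ 0 := ne_of_gt hh
  have hcf : Continuous f := hf.continuous
  set R : ℝ → ℝ := fun y => f y - f x - deriv f x * (y - x) with hRdef
  have hRcont : Continuous R := by unfold R; fun_prop
  have hRbound : ∀ y ∈ Set.Icc x (x+h), |R y| ≤ M * (y-x)^2/2 := by
    intro y hy; simpa [hRdef] using taylorR x h M hh hM f hf hb y hy
  set IR := ∫ u in (0:ℝ)..h, R (x + h - u) * Real.exp (-ς * u) with hIRdef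
  have c1 : Continuous fun u : ℝ => f x * Real.exp (-ς*u) := by fun_prop
  have c2 : Continuous fun u : ℝ => deriv f x * (h * Real.exp (-ς*u) - u * Real.exp (-ς*u)) := by fun_prop
  have cR : Continuous fun u : ℝ => R (x+h-u) * Real.exp (-ς*u) := by fun_prop
  have hsplit : (∫ u in (0:ℝ)..h, f (x + h - u) * Real.exp (-ς * u))
      = f x * ((1 - Real.exp (-ς*h))/ς)
        + deriv f x * (h * ((1 - Real.exp (-ς*h))/ς) - (1 - (1+ς*h)*Real.exp (-ς*h))/ς^2)
        + IR := by
    have h1 : (∫ u in (0:ℝ)..h, f (x + h - u) * Real.exp (-ς * u))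
        = ∫ u in (0:ℝ)..h, (f x * Real.exp (-ς*u)
            + deriv f x * (h * Real.exp (-ς*u) - u * Real.exp (-ς*u))
            + R (x + h - u) * Real.exp (-ς*u)) := by
      congr 1; funext u; simp only [hRdef]; ring
    rw [h1, intervalIntegral.integral_add ((c1.fun_add c2).intervalIntegrable _ _)
          (cR.intervalIntegrable _ _),
        intervalIntegral.integral_add (c1.intervalIntegrable _ _) (c2.intervalIntegrable _ _),
        intervalIntegral.integral_const_mul, intervalIntegral.integral_const_mul,
        intervalIntegral.integral_sub
          ((by fun_prop : Continuous fun u : ℝ => h * Real.exp (-ς*u)).intervalIntegrable _ _)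
          ((by fun_prop : Continuous fun u : ℝ => u * Real.exp (-ς*u)).intervalIntegrable _ _),
        intervalIntegral.integral_const_mul, intA ς h hς', intB ς h hς']
  have hfxh : f (x+h) = f x + deriv f x * h + R (x+h) := by simp only [hRdef]; ring
  have key : (ς * ∫ u in (0:ℝ)..h, f (x + h - u) * Real.exp (-ς * u)) -
        ((1 - (1 + ς * h) * Real.exp (-ς * h)) / (ς * h) * f x +
          (-1 + ς * h + Real.exp (-ς * h)) / (ς * h) * f (x + h))
      = ς * IR - (-1 + ς * h + Real.exp (-ς * h)) / (ς * h) * R (x+h) := by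
    rw [hsplit, hfxh]
    field_simp
    ring
  rw [key]
  -- bounds
  have hRh : |R (x+h)| ≤ M * h^2 / 2 := by
    calc |R (x+h)| ≤ M * ((x+h)-x)^2/2 :=
          hRbound (x+h) (Set.right_mem_Icc.mpr (by linarith))
      _ = M * h^2 / 2 := by ring
  have hIRb : |IR| ≤ M * h^2 / 2 * h := by
    have hbnd : ∀ u ∈ Set.uIoc (0:ℝ) h, ‖R (x+h-u) * Real.exp (-ς*u)‖ ≤ M * h^2 / 2 := by
      intro u hu
      rw [Set.uIoc_of_le (le_of_lt hh)] at hu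
      have hy : x + h - u ∈ Set.Icc x (x+h) := ⟨by linarith [hu.2], by linarith [hu.1]⟩
      have h1 : |R (x+h-u)| ≤ M * (h-u)^2/2 := by
        calc |R (x+h-u)| ≤ M * ((x+h-u)-x)^2/2 := hRbound _ hy
          _ = M * (h-u)^2/2 := by ring
      have h2 : Real.exp (-ς*u) ≤ 1 := Real.exp_le_one_iff.mpr (by nlinarith [hu.1])
      have h3 : M * (h-u)^2/2 ≤ M * h^2/2 := by nlinarith [mul_nonneg hM (mul_nonneg hu.1.le (show (0:ℝ) ≤ 2*h-u by linarith [hu.2]))]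
      calc ‖R (x+h-u) * Real.exp (-ς*u)‖ = |R (x+h-u)| * Real.exp (-ς*u) := by
            rw [Real.norm_eq_abs, abs_mul, abs_of_pos (Real.exp_pos _)]
        _ ≤ (M * h^2/2) * 1 := by
            apply mul_le_mul (le_trans h1 h3) h2 (le_of_lt (Real.exp_pos _)) (by positivity)
        _ = M * h^2/2 := by ring
    calc |IR| ≤ M * h^2/2 * |h - 0| :=
          intervalIntegral.norm_integral_le_of_norm_le_const hbnd
      _ = M * h^2/2 * h := by rw [sub_zero, abs_of_pos hh]
  have hnum0 : 0 ≤ -1 + ς*h + Real.exp (-ς*h) := by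
    nlinarith [Real.add_one_le_exp (-ς*h)]
  have hnum1 : -1 + ς*h + Real.exp (-ς*h) ≤ (ς*h)^2/2 := by
    have := expq (ς*h) (by positivity)
    rw [show -(ς*h) = -ς*h by ring] at this
    nlinarith
  have hw1 : |(-1 + ς * h + Real.exp (-ς * h)) / (ς * h)| ≤ ς * h / 2 := by
    rw [abs_of_nonneg (div_nonneg hnum0 (by positivity))]
    rw [div_le_iff₀ (by positivity)]
    nlinarith
  calc |ς * IR - (-1 + ς * h + Real.exp (-ς * h)) / (ς * h) * R (x+h)|
      ≤ |ς * IR| + |(-1 + ς * h + Real.exp (-ς * h)) / (ς * h) * R (x+h)| := abs_sub _ _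
    _ = ς * |IR| + |(-1 + ς * h + Real.exp (-ς * h)) / (ς * h)| * |R (x+h)| := by
        rw [abs_mul, abs_mul, abs_of_pos hς]
    _ ≤ ς * (M * h^2/2 * h) + (ς * h / 2) * (M * h^2/2) := by
        gcongr
    _ ≤ ς * M * h ^ 3 := by nlinarith [mul_nonneg (mul_nonneg hς.le hM) (pow_pos hh 3).le]
end

section
/- Cross-derivative eigenvalue bound: for all φ₁, φ₂ ∈ [0, 2π], with z₀ = −ρ b sin φ₁ sin φ₂, z₁ = −a₁(1 − cos φ₁) + i ξ₁ q₁ sin φ₁, z₂ = −a₂(1 − cos φ₂) + i ξ₂ q₂ sin φ₂, where a₁ = Δt/h₁², a₂ = Δt/h₂², b = Δt/(h₁h₂), |ρ| ≤ 1, Δt, h₁, h₂ > 0, it holds that |z₀| ≤ 2√(Re(z₁)·Re(z₂)) where Re(zᵢ) ≤ 0 and the square root is of the product of the negated real parts, i.e., |z₀|² ≤ 4 (−Re z₁)(−Re z₂). -/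
open Complex

/-- Cross-derivative eigenvalue bound: with `z₀ = −ρ b sin φ₁ sin φ₂`,
`z₁ = −a₁(1 − cos φ₁) + i ξ₁ q₁ sin φ₁`, `z₂ = −a₂(1 − cos φ₂) + i ξ₂ q₂ sin φ₂`,
it holds `Re z₁ ≤ 0`, `Re z₂ ≤ 0` and `|z₀|² ≤ 4(−Re z₁)(−Re z₂)`. -/
theorem stmt8 (Δt h₁ h₂ ρ ξ₁ ξ₂ φ₁ φ₂ : ℝ)
    (hΔt : 0 < Δt) (hh₁ : 0 < h₁) (hh₂ : 0 < h₂) (hρ : ρ ∈ Set.Icc (-1:ℝ) 1)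
    (hφ₁ : φ₁ ∈ Set.Icc (0:ℝ) (2 * Real.pi)) (hφ₂ : φ₂ ∈ Set.Icc (0:ℝ) (2 * Real.pi))
    (q₁ q₂ a₁ a₂ b : ℝ)
    (hq₁ : q₁ = Δt / h₁) (hq₂ : q₂ = Δt / h₂)
    (ha₁ : a₁ = Δt / h₁ ^ 2) (ha₂ : a₂ = Δt / h₂ ^ 2) (hb : b = Δt / (h₁ * h₂))
    (z₀ z₁ z₂ : ℂ)
    (hz₀ : z₀ = (↑(-ρ * b * Real.sin φ₁ * Real.sin φ₂) : ℂ))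
    (hz₁ : z₁ = -(a₁ : ℂ) * (1 - Real.cos φ₁) + Complex.I * ξ₁ * q₁ * Real.sin φ₁)
    (hz₂ : z₂ = -(a₂ : ℂ) * (1 - Real.cos φ₂) + Complex.I * ξ₂ * q₂ * Real.sin φ₂) :
    z₁.re ≤ 0 ∧ z₂.re ≤ 0 ∧ ‖z₀‖ ^ 2 ≤ 4 * (-z₁.re) * (-z₂.re) := by
  have ha₁' : 0 < a₁ := by rw [ha₁]; positivity
  have ha₂' : 0 < a₂ := by rw [ha₂]; positivity
  have hre1 : z₁.re = -(a₁ * (1 - Real.cos φ₁)) := by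
    rw [hz₁]
    simp only [Complex.add_re, Complex.neg_re, Complex.mul_re, Complex.sub_re,
      Complex.sub_im, Complex.one_re, Complex.one_im, Complex.ofReal_re,
      Complex.ofReal_im, Complex.I_re, Complex.I_im, Complex.mul_im, Complex.neg_im]
    ring
  have hre2 : z₂.re = -(a₂ * (1 - Real.cos φ₂)) := by
    rw [hz₂]
    simp only [Complex.add_re, Complex.neg_re, Complex.mul_re, Complex.sub_re,
      Complex.sub_im, Complex.one_re, Complex.one_im, Complex.ofReal_re,
      Complex.ofReal_im, Complex.I_re, Complex.I_im, Complex.mul_im, Complex.neg_im]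
    ring
  have hc1 := Real.cos_le_one φ₁
  have hc2 := Real.cos_le_one φ₂
  have hc1' := Real.neg_one_le_cos φ₁
  have hc2' := Real.neg_one_le_cos φ₂
  obtain ⟨hρ1, hρ2⟩ := hρ
  refine ⟨by nlinarith, by nlinarith, ?_⟩
  rw [hz₀, Complex.norm_real, Real.norm_eq_abs, _root_.sq_abs, hre1, hre2]
  have hs1 : Real.sin φ₁ ^ 2 = 1 - Real.cos φ₁ ^ 2 := Real.sin_sq φ₁
  have hs2 : Real.sin φ₂ ^ 2 = 1 - Real.cos φ₂ ^ 2 := Real.sin_sq φ₂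
  have hb2 : b ^ 2 = a₁ * a₂ := by rw [hb, ha₁, ha₂]; field_simp
  have d1 : (0:ℝ) ≤ 1 - Real.cos φ₁ := by linarith
  have d2 : (0:ℝ) ≤ 1 - Real.cos φ₂ := by linarith
  have h4 : (1 + Real.cos φ₁) * (1 + Real.cos φ₂) ≤ 4 := by
    have := mul_le_mul (by linarith : 1 + Real.cos φ₁ ≤ 2) (by linarith : 1 + Real.cos φ₂ ≤ 2)
      (by linarith) (by norm_num)
    linarith
  have key : Real.sin φ₁ ^ 2 * Real.sin φ₂ ^ 2 ≤ 4 * ((1 - Real.cos φ₁) * (1 - Real.cos φ₂)) := by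
    rw [hs1, hs2]
    calc (1 - Real.cos φ₁ ^ 2) * (1 - Real.cos φ₂ ^ 2)
        = ((1 - Real.cos φ₁) * (1 - Real.cos φ₂)) * ((1 + Real.cos φ₁) * (1 + Real.cos φ₂)) := by
          ring
      _ ≤ ((1 - Real.cos φ₁) * (1 - Real.cos φ₂)) * 4 :=
          mul_le_mul_of_nonneg_left h4 (mul_nonneg d1 d2)
      _ = 4 * ((1 - Real.cos φ₁) * (1 - Real.cos φ₂)) := by ring
  have hρsq : ρ ^ 2 ≤ 1 := by nlinarith
  have hX : (0:ℝ) ≤ a₁ * a₂ * (Real.sin φ₁ ^ 2 * Real.sin φ₂ ^ 2) := by positivity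
  have step1 : a₁ * a₂ * (Real.sin φ₁ ^ 2 * Real.sin φ₂ ^ 2)
      ≤ a₁ * a₂ * (4 * ((1 - Real.cos φ₁) * (1 - Real.cos φ₂))) :=
    mul_le_mul_of_nonneg_left key (by positivity)
  have step2 : ρ ^ 2 * (a₁ * a₂ * (Real.sin φ₁ ^ 2 * Real.sin φ₂ ^ 2))
      ≤ a₁ * a₂ * (Real.sin φ₁ ^ 2 * Real.sin φ₂ ^ 2) := by
    have := mul_le_mul_of_nonneg_right hρsq hX
    linarith
  have e : (-ρ * b * Real.sin φ₁ * Real.sin φ₂) ^ 2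
      = ρ ^ 2 * (a₁ * a₂ * (Real.sin φ₁ ^ 2 * Real.sin φ₂ ^ 2)) := by
    linear_combination (ρ ^ 2 * Real.sin φ₁ ^ 2 * Real.sin φ₂ ^ 2) * hb2
  rw [e]
  calc ρ ^ 2 * (a₁ * a₂ * (Real.sin φ₁ ^ 2 * Real.sin φ₂ ^ 2))
      ≤ a₁ * a₂ * (Real.sin φ₁ ^ 2 * Real.sin φ₂ ^ 2) := step2
    _ ≤ a₁ * a₂ * (4 * ((1 - Real.cos φ₁) * (1 - Real.cos φ₂))) := step1
    _ = 4 * -(-(a₁ * (1 - Real.cos φ₁))) * -(-(a₂ * (1 - Real.cos φ₂))) := by ring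
end

section
/- The modulus of the eigenvalue of the discretized exponential jump operator is bounded uniformly in the mesh: for ζ > 0, h > 0 with e^{-ζh} < 1, and any φ ∈ [0, 2π], |ζh(½ + e^{-hζ+iφ}/(1 − e^{-hζ+iφ}))| ≤ ζh(½ + e^{-ζh}/(1 − e^{-ζh})), and for h small enough (specifically ζh ≤ 1) this bound is at most 2. -/
open Complex

/-- The modulus of the eigenvalue of the discretized exponential jump operator is
bounded uniformly over `φ ∈ [0, 2π]` by `ζh(½ + e^(-ζh)/(1 − e^(-ζh)))`, and for
`ζh ≤ 1` this bound is at most `2`. -/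
theorem stmt10 (ζ h φ : ℝ) (hζ : 0 < ζ) (hh : 0 < h)
    (hφ : φ ∈ Set.Icc (0:ℝ) (2 * Real.pi)) :
    ‖(ζ * h : ℂ) * (1 / 2 + Complex.exp (-h * ζ + Complex.I * φ) /
        (1 - Complex.exp (-h * ζ + Complex.I * φ)))‖ ≤
      ζ * h * (1 / 2 + Real.exp (-ζ * h) / (1 - Real.exp (-ζ * h))) ∧
    (ζ * h ≤ 1 →
      ζ * h * (1 / 2 + Real.exp (-ζ * h) / (1 - Real.exp (-ζ * h))) ≤ 2) := by
  have hx : 0 < ζ * h := mul_pos hζ hh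
  set r : ℝ := Real.exp (-ζ * h) with hrdef
  have hrpos : 0 < r := Real.exp_pos _
  have hr1 : r < 1 := by
    rw [hrdef, Real.exp_lt_one_iff]
    nlinarith
  set z : ℂ := Complex.exp (-h * ζ + Complex.I * φ) with hzdef
  have habsz : ‖z‖ = r := by
    rw [hzdef, Complex.norm_exp, hrdef]
    congr 1
    simp [mul_comm]
  constructor
  · rw [norm_mul]
    have h1 : ‖((ζ * h : ℝ) : ℂ)‖ = ζ * h := by
      rw [Complex.norm_real, Real.norm_of_nonneg hx.le]
    have h1' : ‖(ζ : ℂ) * (h : ℂ)‖ = ζ * h := by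
      rw [norm_mul, Complex.norm_real, Complex.norm_real,
        Real.norm_of_nonneg hζ.le, Real.norm_of_nonneg hh.le]
    have hden : 1 - r ≤ ‖1 - z‖ := by
      calc 1 - r = ‖(1 : ℂ)‖ - ‖z‖ := by rw [habsz, norm_one]
        _ ≤ ‖1 - z‖ := by
            have := norm_sub_norm_le (1 : ℂ) z
            simpa using this
    have hdenpos : (0 : ℝ) < ‖1 - z‖ := lt_of_lt_of_le (by linarith) hden
    have hmain : ‖1 / 2 + z / (1 - z)‖ ≤ 1 / 2 + r / (1 - r) := by
      calc ‖1 / 2 + z / (1 - z)‖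
          ≤ ‖(1 / 2 : ℂ)‖ + ‖z / (1 - z)‖ :=
            norm_add_le _ _
        _ = 1 / 2 + ‖z‖ / ‖1 - z‖ := by
            rw [norm_div]
            norm_num
        _ ≤ 1 / 2 + r / (1 - r) := by
            rw [habsz]
            have : r / ‖1 - z‖ ≤ r / (1 - r) :=
              div_le_div_of_nonneg_left hrpos.le (by linarith) hden
            linarith
    calc ‖(ζ : ℂ) * (h : ℂ)‖ * ‖1 / 2 + z / (1 - z)‖
        ≤ (ζ * h) * (1 / 2 + r / (1 - r)) := by
          rw [h1']
          exact mul_le_mul_of_nonneg_left hmain hx.le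
      _ = ζ * h * (1 / 2 + r / (1 - r)) := by ring
  · intro hle
    set x : ℝ := ζ * h with hxdef
    have hE : 1 + x ≤ Real.exp x := by linarith [Real.add_one_le_exp x]
    have hE1 : 0 < Real.exp x - 1 := by linarith
    have hkey : Real.exp (-ζ * h) / (1 - Real.exp (-ζ * h)) = 1 / (Real.exp x - 1) := by
      have hne : -ζ * h = -x := by rw [hxdef]; ring
      rw [hne, Real.exp_neg]
      have hEpos : 0 < Real.exp x := Real.exp_pos x
      field_simp
    rw [hkey]
    have hstep : 1 / (Real.exp x - 1) ≤ 1 / x :=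
      one_div_le_one_div_of_le hx (by linarith)
    calc x * (1 / 2 + 1 / (Real.exp x - 1))
        ≤ x * (1 / 2 + 1 / x) := by
          apply mul_le_mul_of_nonneg_left _ hx.le
          linarith
      _ = x / 2 + 1 := by field_simp
      _ ≤ 2 := by linarith
end

section
/- Perturbation bound for the HV amplification symbol: let T(z₀, z₁, z₂) = 1 + 2(z₀+z)/p − (z₀+z)/p² + σ(z₀+z)²/p² with z = z₁+z₂ and p = (1−θz₁)(1−θz₂). Suppose |T(z₀, z̃₁, z̃₂)| ≤ 1, |p| ≥ 1 with p computed from z̃₁, z̃₂, |z₀ + z̃₁ + z̃₂|/|p| ≤ c₁, σ, θ ≥ 0, and |s₀| ≤ c₀Δt with Δt ≤ 1. Then |T(z₀ + s₀, z̃₁, z̃₂)| ≤ 1 + cΔt for c = (3 + 2σc₁ + c₀σ)c₀. -/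
/-- Perturbation bound for the HV amplification symbol: with
`T(w) = 1 + 2(w+z̃₁+z̃₂)/p − (w+z̃₁+z̃₂)/p² + σ(w+z̃₁+z̃₂)²/p²`,
`p = (1−θz̃₁)(1−θz̃₂)`, if `|T(z₀)| ≤ 1`, `|p| ≥ 1`, `|z₀+z̃₁+z̃₂|/|p| ≤ c₁`,
and `|s₀| ≤ c₀ Δt` with `0 < Δt ≤ 1`, then
`|T(z₀+s₀)| ≤ 1 + (3 + 2σc₁ + c₀σ)c₀ Δt`. -/
theorem stmt12 (z₀ z₁ z₂ s₀ : ℂ) (σ θ c₀ c₁ Δt : ℝ)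
    (hσ : 0 ≤ σ) (hθ : 0 ≤ θ) (hc₀ : 0 ≤ c₀) (hc₁ : 0 ≤ c₁)
    (hΔt : 0 < Δt) (hΔt1 : Δt ≤ 1)
    (p : ℂ) (hp : p = (1 - (θ : ℂ) * z₁) * (1 - (θ : ℂ) * z₂))
    (T : ℂ → ℂ)
    (hT : ∀ w : ℂ, T w = 1 + 2 * (w + z₁ + z₂) / p - (w + z₁ + z₂) / p ^ 2 +
      (σ : ℂ) * (w + z₁ + z₂) ^ 2 / p ^ 2)
    (hT0 : ‖T z₀‖ ≤ 1)
    (hpge : 1 ≤ ‖p‖)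
    (hc : ‖z₀ + z₁ + z₂‖ / ‖p‖ ≤ c₁)
    (hs : ‖s₀‖ ≤ c₀ * Δt) :
    ‖T (z₀ + s₀)‖ ≤ 1 + (3 + 2 * σ * c₁ + c₀ * σ) * c₀ * Δt := by
  have hp0 : p ≠ 0 := by
    intro h
    rw [h] at hpge; simp at hpge; linarith
  have key : T (z₀ + s₀) = T z₀ + 2 * s₀ / p - s₀ / p ^ 2 +
      (σ : ℂ) * (2 * (z₀ + z₁ + z₂) * s₀ + s₀ ^ 2) / p ^ 2 := by
    rw [hT, hT]; ring
  set P := ‖p‖ with hP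
  set s := ‖s₀‖ with hsdef
  set a := ‖z₀ + z₁ + z₂‖ with hadef
  have hP0 : (0:ℝ) < P := lt_of_lt_of_le one_pos hpge
  have htri : ‖T (z₀ + s₀)‖ ≤ ‖T z₀‖ + 2 * s / P + s / P ^ 2 +
      σ * (2 * a * s + s ^ 2) / P ^ 2 := by
    rw [key]
    refine le_trans (norm_add_le _ _) ?_
    have h1 : ‖T z₀ + 2 * s₀ / p - s₀ / p ^ 2‖ ≤
        ‖T z₀‖ + 2 * s / P + s / P ^ 2 := by
      refine le_trans (norm_sub_le _ _) ?_
      have := norm_add_le (T z₀) (2 * s₀ / p)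
      have e1 : ‖2 * s₀ / p‖ = 2 * s / P := by
        simp [norm_div, norm_mul, hsdef, hP]
      have e2 : ‖s₀ / p ^ 2‖ = s / P ^ 2 := by
        simp [norm_div, norm_pow, hsdef, hP]
      rw [e1] at this
      rw [e2]
      linarith
    have h2 : ‖(σ : ℂ) * (2 * (z₀ + z₁ + z₂) * s₀ + s₀ ^ 2) / p ^ 2‖ ≤
        σ * (2 * a * s + s ^ 2) / P ^ 2 := by
      rw [norm_div, norm_mul, norm_pow, Complex.norm_real, Real.norm_of_nonneg hσ]
      gcongr
      refine le_trans (norm_add_le _ _) ?_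
      rw [norm_mul, norm_mul, norm_pow]
      simp [hsdef, hadef]
    linarith
  have hs0 : 0 ≤ s := norm_nonneg _
  have ha0 : 0 ≤ a := norm_nonneg _
  have hP0' : (0:ℝ) < P ^ 2 := by positivity
  have haP : a ≤ c₁ * P := by
    rw [div_le_iff₀ hP0] at hc; linarith
  have hP2 : (1:ℝ) ≤ P ^ 2 := by nlinarith
  have hPP : P ≤ P ^ 2 := by nlinarith
  have hcd : 0 ≤ c₀ * Δt := mul_nonneg hc₀ hΔt.le
  have h1 : 2 * s / P ≤ 2 * (c₀ * Δt) := by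
    rw [div_le_iff₀ hP0]
    calc 2 * s ≤ 2 * (c₀ * Δt) := by linarith
      _ = 2 * (c₀ * Δt) * 1 := by ring
      _ ≤ 2 * (c₀ * Δt) * P := by
          exact mul_le_mul_of_nonneg_left hpge (by linarith)
  have h2 : s / P ^ 2 ≤ c₀ * Δt := by
    rw [div_le_iff₀ hP0']
    calc s ≤ c₀ * Δt := hs
      _ = c₀ * Δt * 1 := by ring
      _ ≤ c₀ * Δt * P ^ 2 := mul_le_mul_of_nonneg_left hP2 hcd
  have has : a * s ≤ c₁ * (c₀ * Δt) * P ^ 2 := by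
    calc a * s ≤ (c₁ * P) * (c₀ * Δt) :=
          mul_le_mul haP hs hs0 (mul_nonneg hc₁ hP0.le)
      _ = c₁ * (c₀ * Δt) * P := by ring
      _ ≤ c₁ * (c₀ * Δt) * P ^ 2 :=
          mul_le_mul_of_nonneg_left hPP (mul_nonneg hc₁ hcd)
  have hss : s ^ 2 ≤ c₀ * (c₀ * Δt) * P ^ 2 := by
    have t1 : s ^ 2 ≤ (c₀ * Δt) ^ 2 := by
      have := mul_le_mul hs hs hs0 hcd
      calc s ^ 2 = s * s := sq s
        _ ≤ (c₀ * Δt) * (c₀ * Δt) := this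
        _ = (c₀ * Δt) ^ 2 := (sq _).symm
    have t2 : (c₀ * Δt) ^ 2 ≤ c₀ * (c₀ * Δt) := by nlinarith
    calc s ^ 2 ≤ c₀ * (c₀ * Δt) := t1.trans t2
      _ = c₀ * (c₀ * Δt) * 1 := by ring
      _ ≤ c₀ * (c₀ * Δt) * P ^ 2 :=
          mul_le_mul_of_nonneg_left hP2 (mul_nonneg hc₀ hcd)
  have h3 : σ * (2 * a * s + s ^ 2) / P ^ 2 ≤ (2 * σ * c₁ + c₀ * σ) * (c₀ * Δt) := by
    rw [div_le_iff₀ hP0']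
    have u1 := mul_le_mul_of_nonneg_left has hσ
    have u2 := mul_le_mul_of_nonneg_left hss hσ
    nlinarith [u1, u2]
  linarith
end

section
/- Existence and uniqueness of the clearing vector for two banks: given A₁, A₂ ≥ 0, L₁, L₂, L₁₂, L₂₁ > 0, there exists a unique (ω₁, ω₂) ∈ [0,1]² satisfying min{Aᵢ + ω_{ī} L_{ī i}, Lᵢ + L_{i ī}} = ωᵢ (Lᵢ + L_{i ī}) for i = 1, 2 (with ī = 3 − i). -/
private lemma min_lip (a b c : ℝ) : |min a c - min b c| ≤ |a - b| := by
  rw [abs_le]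
  rcases min_cases a c with ⟨h1, h1'⟩ | ⟨h1, h1'⟩ <;>
    rcases min_cases b c with ⟨h2, h2'⟩ | ⟨h2, h2'⟩ <;>
    rw [h1, h2] <;>
    constructor <;>
    linarith [le_abs_self (a - b), neg_abs_le (a - b), abs_nonneg (a - b)]

/-- Existence and uniqueness of the two-bank clearing vector: given `A₁, A₂ ≥ 0` and
positive liabilities, there is a unique `(ω₁, ω₂) ∈ [0,1]²` with
`min{Aᵢ + ω_ī L_ī i, Lᵢ + L_i ī} = ωᵢ (Lᵢ + L_i ī)` for `i = 1, 2`. -/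
theorem stmt15 (A₁ A₂ L₁ L₂ L₁₂ L₂₁ : ℝ)
    (hA₁ : 0 ≤ A₁) (hA₂ : 0 ≤ A₂)
    (hL₁ : 0 < L₁) (hL₂ : 0 < L₂) (hL₁₂ : 0 < L₁₂) (hL₂₁ : 0 < L₂₁) :
    ∃! ω : ℝ × ℝ,
      ω.1 ∈ Set.Icc (0:ℝ) 1 ∧ ω.2 ∈ Set.Icc (0:ℝ) 1 ∧
      min (A₁ + ω.2 * L₂₁) (L₁ + L₁₂) = ω.1 * (L₁ + L₁₂) ∧
      min (A₂ + ω.1 * L₁₂) (L₂ + L₂₁) = ω.2 * (L₂ + L₂₁) := by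
  have hP₁ : 0 < L₁ + L₁₂ := by linarith
  have hP₂ : 0 < L₂ + L₂₁ := by linarith
  -- uniqueness core (no boundedness needed)
  have uniq : ∀ x y x' y' : ℝ,
      min (A₁ + y * L₂₁) (L₁ + L₁₂) = x * (L₁ + L₁₂) →
      min (A₂ + x * L₁₂) (L₂ + L₂₁) = y * (L₂ + L₂₁) →
      min (A₁ + y' * L₂₁) (L₁ + L₁₂) = x' * (L₁ + L₁₂) →
      min (A₂ + x' * L₁₂) (L₂ + L₂₁) = y' * (L₂ + L₂₁) →
      x = x' ∧ y = y' := by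
    intro x y x' y' h1 h2 h3 h4
    have e1 : |x - x'| * (L₁ + L₁₂) ≤ |y - y'| * L₂₁ := by
      have H := min_lip (A₁ + y * L₂₁) (A₁ + y' * L₂₁) (L₁ + L₁₂)
      rw [h1, h3] at H
      have h5 : |x * (L₁ + L₁₂) - x' * (L₁ + L₁₂)| = |x - x'| * (L₁ + L₁₂) := by
        rw [← sub_mul, abs_mul, abs_of_pos hP₁]
      have h6 : |(A₁ + y * L₂₁) - (A₁ + y' * L₂₁)| = |y - y'| * L₂₁ := by
        have e : (A₁ + y * L₂₁) - (A₁ + y' * L₂₁) = (y - y') * L₂₁ := by ring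
        rw [e, abs_mul, abs_of_pos hL₂₁]
      rw [h5, h6] at H
      exact H
    have e2 : |y - y'| * (L₂ + L₂₁) ≤ |x - x'| * L₁₂ := by
      have H := min_lip (A₂ + x * L₁₂) (A₂ + x' * L₁₂) (L₂ + L₂₁)
      rw [h2, h4] at H
      have h5 : |y * (L₂ + L₂₁) - y' * (L₂ + L₂₁)| = |y - y'| * (L₂ + L₂₁) := by
        rw [← sub_mul, abs_mul, abs_of_pos hP₂]
      have h6 : |(A₂ + x * L₁₂) - (A₂ + x' * L₁₂)| = |x - x'| * L₁₂ := by
        have e : (A₂ + x * L₁₂) - (A₂ + x' * L₁₂) = (x - x') * L₁₂ := by ring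
        rw [e, abs_mul, abs_of_pos hL₁₂]
      rw [h5, h6] at H
      exact H
    have hx : x = x' := by
      by_contra hne
      have h0 : 0 < |x - x'| := abs_pos.mpr (sub_ne_zero.mpr hne)
      nlinarith [mul_le_mul_of_nonneg_right e1 hP₂.le,
        mul_le_mul_of_nonneg_right e2 hL₂₁.le,
        mul_pos (mul_pos h0 hL₁) hL₂, mul_pos (mul_pos h0 hL₁) hL₂₁,
        mul_pos (mul_pos h0 hL₁₂) hL₂, abs_nonneg (y - y')]
    subst hx
    refine ⟨rfl, ?_⟩
    have : y * (L₂ + L₂₁) = y' * (L₂ + L₂₁) := by rw [← h2, ← h4]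
    exact mul_right_cancel₀ hP₂.ne' this
  -- existence via IVT
  set f : ℝ → ℝ := fun x =>
    min (A₁ + (min (A₂ + x * L₁₂) (L₂ + L₂₁) / (L₂ + L₂₁)) * L₂₁) (L₁ + L₁₂)
      - x * (L₁ + L₁₂) with hf
  have hcont : Continuous f := by
    apply Continuous.sub
    · exact (continuous_const.add ((((continuous_const.add
        (continuous_id.mul continuous_const)).min continuous_const).div_const _).mul
        continuous_const)).min continuous_const
    · exact continuous_id.mul continuous_const
  have hf0 : 0 ≤ f 0 := by
    have hm : 0 ≤ min (A₂ + 0 * L₁₂) (L₂ + L₂₁) := le_min (by linarith) hP₂.le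
    have h1 : 0 ≤ A₁ + (min (A₂ + 0 * L₁₂) (L₂ + L₂₁) / (L₂ + L₂₁)) * L₂₁ := by
      have : 0 ≤ (min (A₂ + 0 * L₁₂) (L₂ + L₂₁) / (L₂ + L₂₁)) * L₂₁ :=
        mul_nonneg (div_nonneg hm hP₂.le) hL₂₁.le
      linarith
    have : 0 ≤ min (A₁ + (min (A₂ + 0 * L₁₂) (L₂ + L₂₁) / (L₂ + L₂₁)) * L₂₁) (L₁ + L₁₂) :=
      le_min h1 hP₁.le
    simp only [hf]
    linarith
  have hf1 : f 1 ≤ 0 := by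
    have := min_le_right (A₁ + (min (A₂ + 1 * L₁₂) (L₂ + L₂₁) / (L₂ + L₂₁)) * L₂₁) (L₁ + L₁₂)
    simp only [hf]
    linarith
  obtain ⟨x, hxI, hx0⟩ : ∃ x ∈ Set.Icc (0:ℝ) 1, f x = 0 := by
    have hsub := intermediate_value_Icc' (by norm_num : (0:ℝ) ≤ 1) hcont.continuousOn
    have h0mem : (0:ℝ) ∈ Set.Icc (f 1) (f 0) := ⟨hf1, hf0⟩
    obtain ⟨x, hx, hfx⟩ := hsub h0mem
    exact ⟨x, hx, hfx⟩
  set y : ℝ := min (A₂ + x * L₁₂) (L₂ + L₂₁) / (L₂ + L₂₁) with hy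
  have heq2 : min (A₂ + x * L₁₂) (L₂ + L₂₁) = y * (L₂ + L₂₁) := by
    rw [hy, div_mul_cancel₀ _ hP₂.ne']
  have heq1 : min (A₁ + y * L₂₁) (L₁ + L₁₂) = x * (L₁ + L₁₂) := by
    have : f x = 0 := hx0
    simp only [hf] at this
    linarith
  have hyI : y ∈ Set.Icc (0:ℝ) 1 := by
    constructor
    · exact div_nonneg (le_min (by nlinarith [hxI.1]) hP₂.le) hP₂.le
    · rw [hy, div_le_one hP₂]
      exact min_le_right _ _
  refine ⟨(x, y), ⟨hxI, hyI, heq1, heq2⟩, ?_⟩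
  rintro ⟨x', y'⟩ ⟨_, _, h1', h2'⟩
  obtain ⟨hxx, hyy⟩ := uniq x' y' x y h1' h2' heq1 heq2
  simp [Prod.ext_iff, hxx, hyy]
end

section
/- Monotonicity of the clearing payment fractions: for the two-bank clearing system min{Aᵢ + ω_{ī} L_{ī i}, Lᵢ + L_{i ī}} = ωᵢ(Lᵢ + L_{i ī}), the unique solution (ω₁, ω₂) is componentwise nondecreasing in (A₁, A₂): if A₁' ≥ A₁ and A₂' ≥ A₂ then ω₁' ≥ ω₁ and ω₂' ≥ ω₂. -/
/-- Monotonicity of the clearing payment fractions: the solutions of the two-bank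
clearing system are componentwise nondecreasing in the asset values. -/
theorem stmt16 (A₁ A₂ A₁' A₂' L₁ L₂ L₁₂ L₂₁ ω₁ ω₂ ω₁' ω₂' : ℝ)
    (hA₁ : 0 ≤ A₁) (hA₂ : 0 ≤ A₂) (hA₁' : A₁ ≤ A₁') (hA₂' : A₂ ≤ A₂')
    (hL₁ : 0 < L₁) (hL₂ : 0 < L₂) (hL₁₂ : 0 < L₁₂) (hL₂₁ : 0 < L₂₁)
    (hω₁ : ω₁ ∈ Set.Icc (0:ℝ) 1) (hω₂ : ω₂ ∈ Set.Icc (0:ℝ) 1)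
    (hω₁' : ω₁' ∈ Set.Icc (0:ℝ) 1) (hω₂' : ω₂' ∈ Set.Icc (0:ℝ) 1)
    (heq₁ : min (A₁ + ω₂ * L₂₁) (L₁ + L₁₂) = ω₁ * (L₁ + L₁₂))
    (heq₂ : min (A₂ + ω₁ * L₁₂) (L₂ + L₂₁) = ω₂ * (L₂ + L₂₁))
    (heq₁' : min (A₁' + ω₂' * L₂₁) (L₁ + L₁₂) = ω₁' * (L₁ + L₁₂))
    (heq₂' : min (A₂' + ω₁' * L₁₂) (L₂ + L₂₁) = ω₂' * (L₂ + L₂₁)) :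
    ω₁ ≤ ω₁' ∧ ω₂ ≤ ω₂' := by
  have ha1 : ω₁ * (L₁ + L₁₂) ≤ A₁ + ω₂ * L₂₁ := heq₁ ▸ min_le_left _ _
  have hb1 : ω₁ * (L₁ + L₁₂) ≤ L₁ + L₁₂ := heq₁ ▸ min_le_right _ _
  have ha2 : ω₂ * (L₂ + L₂₁) ≤ A₂ + ω₁ * L₁₂ := heq₂ ▸ min_le_left _ _
  have hb2 : ω₂ * (L₂ + L₂₁) ≤ L₂ + L₂₁ := heq₂ ▸ min_le_right _ _
  have h1 : (ω₁ - ω₁') * (L₁ + L₁₂) ≤ max ((ω₂ - ω₂') * L₂₁) 0 := by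
    rcases min_cases (A₁' + ω₂' * L₂₁) (L₁ + L₁₂) with ⟨h, _⟩ | ⟨h, _⟩ <;>
      rw [h] at heq₁'
    · have := le_max_left ((ω₂ - ω₂') * L₂₁) 0; nlinarith
    · have := le_max_right ((ω₂ - ω₂') * L₂₁) 0; nlinarith
  have h2 : (ω₂ - ω₂') * (L₂ + L₂₁) ≤ max ((ω₁ - ω₁') * L₁₂) 0 := by
    rcases min_cases (A₂' + ω₁' * L₁₂) (L₂ + L₂₁) with ⟨h, _⟩ | ⟨h, _⟩ <;>
      rw [h] at heq₂'
    · have := le_max_left ((ω₁ - ω₁') * L₁₂) 0; nlinarith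
    · have := le_max_right ((ω₁ - ω₁') * L₁₂) 0; nlinarith
  rcases le_total ((ω₂ - ω₂') * L₂₁) 0 with hc | hc
  · rw [max_eq_right hc] at h1
    have hd1 : ω₁ ≤ ω₁' := by nlinarith
    have : max ((ω₁ - ω₁') * L₁₂) 0 = 0 := max_eq_right (by nlinarith)
    rw [this] at h2
    exact ⟨hd1, by nlinarith⟩
  · rw [max_eq_left hc] at h1
    rcases le_total ((ω₁ - ω₁') * L₁₂) 0 with hd | hd
    · rw [max_eq_right hd] at h2
      have he : ω₂ ≤ ω₂' := by nlinarith
      constructor <;> nlinarith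
    · rw [max_eq_left hd] at h2
      have key1 := mul_le_mul_of_nonneg_right h1 (le_of_lt (by linarith : (0:ℝ) < L₂ + L₂₁))
      have key2 := mul_le_mul_of_nonneg_right h2 hL₂₁.le
      have h3 : (ω₁ - ω₁') * ((L₁ + L₁₂) * (L₂ + L₂₁) - L₁₂ * L₂₁) ≤ 0 := by
        linarith [key1, key2]
      have hfac : 0 < (L₁ + L₁₂) * (L₂ + L₂₁) - L₁₂ * L₂₁ := by
        linarith [mul_pos hL₁ hL₂, mul_pos hL₁ hL₂₁, mul_pos hL₁₂ hL₂]
      have hd1 : ω₁ ≤ ω₁' := by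
        by_contra hlt
        push_neg at hlt
        have := mul_pos (sub_pos.mpr hlt) hfac
        linarith
      have he : ω₂ ≤ ω₂' := by
        have h4 : (ω₁ - ω₁') * L₁₂ ≤ 0 :=
          mul_nonpos_of_nonpos_of_nonneg (by linarith) hL₁₂.le
        have h5 := le_of_mul_le_mul_right
          (by linarith : (ω₂ - ω₂') * (L₂ + L₂₁) ≤ 0 * (L₂ + L₂₁))
          (by linarith : (0:ℝ) < L₂ + L₂₁)
        linarith
      exact ⟨hd1, he⟩
end
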